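/- arXiv:1905.09778 — 3 statements merged into one kernel-verified Lean document; each statement's English description precedes it below -/
import Mathlib

section
/- Let O be a nonempty finite set, ε > 0, Δ > 0, and let u, u' : O → ℝ be two utility functions satisfying |u(o) − u'(o)| ≤ Δ for every o ∈ O. Then for every o ∈ O, the exponential-mechanism probability satisfies P_u(o) ≤ exp(ε) · P_{u'}(o), where P_w(o) = exp(ε·w(o)/(2Δ)) / Σ_{o'∈O} exp(ε·w(o')/(2Δ)). -/
/-- Exponential mechanism: probability ratio bound between two utility
functions of sensitivity at most `Δ`. -/
theorem exponential_mechanism_prob_bound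
    {O : Type*} [Fintype O] [Nonempty O]
    (ε Δ : ℝ) (hε : 0 < ε) (hΔ : 0 < Δ)
    (u u' : O → ℝ) (h : ∀ o : O, |u o - u' o| ≤ Δ) (o : O) :
    Real.exp (ε * u o / (2 * Δ)) / (∑ o' : O, Real.exp (ε * u o' / (2 * Δ)))
      ≤ Real.exp ε *
        (Real.exp (ε * u' o / (2 * Δ)) /
          (∑ o' : O, Real.exp (ε * u' o' / (2 * Δ)))) := by
  have hS : 0 < ∑ o' : O, Real.exp (ε * u o' / (2 * Δ)) :=
    Finset.sum_pos (fun _ _ => Real.exp_pos _) Finset.univ_nonempty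
  have hS' : 0 < ∑ o' : O, Real.exp (ε * u' o' / (2 * Δ)) :=
    Finset.sum_pos (fun _ _ => Real.exp_pos _) Finset.univ_nonempty
  have key : ∀ a b : ℝ, a - b ≤ Δ →
      Real.exp (ε * a / (2 * Δ)) ≤ Real.exp (ε / 2) * Real.exp (ε * b / (2 * Δ)) := by
    intro a b hab
    rw [← Real.exp_add]
    apply Real.exp_le_exp.mpr
    rw [div_add_div _ _ (by norm_num) (by positivity), div_le_div_iff₀ (by positivity) (by positivity)]
    nlinarith [mul_le_mul_of_nonneg_left hab hε.le]
  have h1 : Real.exp (ε * u o / (2 * Δ)) ≤ Real.exp (ε / 2) * Real.exp (ε * u' o / (2 * Δ)) :=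
    key _ _ (by have := abs_le.mp (h o); linarith [this.2])
  have h2 : (∑ o' : O, Real.exp (ε * u' o' / (2 * Δ)))
      ≤ Real.exp (ε / 2) * ∑ o' : O, Real.exp (ε * u o' / (2 * Δ)) := by
    rw [Finset.mul_sum]
    exact Finset.sum_le_sum fun i _ =>
      key _ _ (by have := abs_le.mp (h i); linarith [this.1])
  rw [← mul_div_assoc, div_le_div_iff₀ hS hS']
  have hE : Real.exp (ε / 2) * Real.exp (ε / 2) = Real.exp ε := by
    rw [← Real.exp_add]; ring_nf
  calc Real.exp (ε * u o / (2 * Δ)) * ∑ o' : O, Real.exp (ε * u' o' / (2 * Δ))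
      ≤ (Real.exp (ε / 2) * Real.exp (ε * u' o / (2 * Δ))) *
          (Real.exp (ε / 2) * ∑ o' : O, Real.exp (ε * u o' / (2 * Δ))) :=
        mul_le_mul h1 h2 hS'.le (by positivity)
    _ = Real.exp ε * Real.exp (ε * u' o / (2 * Δ)) * ∑ o' : O, Real.exp (ε * u o' / (2 * Δ)) := by
        rw [← hE]; ring
end

section
/- Let O be a nonempty finite set, ε > 0, Δ > 0, and let u, u' : O → ℝ satisfy |u(o) − u'(o)| ≤ Δ for every o ∈ O. Then the normalizing constants satisfy Σ_{o∈O} exp(ε·u'(o)/(2Δ)) ≤ exp(ε/2) · Σ_{o∈O} exp(ε·u(o)/(2Δ)). -/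
/-- Exponential mechanism: bound on the ratio of normalizing constants for
two utility functions of sensitivity at most `Δ`. -/
theorem exponential_mechanism_normalizer_bound
    {O : Type*} [Fintype O] [Nonempty O]
    (ε Δ : ℝ) (hε : 0 < ε) (hΔ : 0 < Δ)
    (u u' : O → ℝ) (h : ∀ o : O, |u o - u' o| ≤ Δ) :
    (∑ o : O, Real.exp (ε * u' o / (2 * Δ)))
      ≤ Real.exp (ε / 2) * (∑ o : O, Real.exp (ε * u o / (2 * Δ))) := by
  rw [Finset.mul_sum]
  apply Finset.sum_le_sum
  intro o _
  rw [← Real.exp_add]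
  apply Real.exp_le_exp.2
  have h1 := (abs_le.1 (h o)).1
  have : ε * u' o / (2 * Δ) ≤ ε * (u o + Δ) / (2 * Δ) := by
    apply div_le_div_of_nonneg_right _ (by positivity)
    nlinarith
  calc ε * u' o / (2 * Δ) ≤ ε * (u o + Δ) / (2 * Δ) := this
    _ = ε / 2 + ε * u o / (2 * Δ) := by field_simp; ring
end

section
/- Let λ > 0, d ≥ 1, and q, q' ∈ ℝ^d. Let μ_q denote the measure on ℝ^d with density x ↦ ∏_{i=1}^d (1/(2λ))·exp(−|x_i − q_i|/λ) with respect to Lebesgue measure, and define μ_{q'} analogously. Then for every measurable set S ⊆ ℝ^d, μ_q(S) ≤ exp(‖q − q'‖₁/λ) · μ_{q'}(S), where ‖q − q'‖₁ = Σ_{i=1}^d |q_i − q'_i|. -/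
open MeasureTheory

/-- The `d`-dimensional i.i.d. Laplace measure with center `q` and scale `lam`. -/
noncomputable def laplaceMeasure (d : ℕ) (lam : ℝ) (q : Fin d → ℝ) :
    Measure (Fin d → ℝ) :=
  volume.withDensity fun x =>
    ENNReal.ofReal (∏ i : Fin d, (1 / (2 * lam)) * Real.exp (-|x i - q i| / lam))

/-!
The one-dimensional Laplace density at center `a` is at most `exp (|a - b| / λ)` times the one
at center `b`, by the triangle inequality `|t - b| ≤ |t - a| + |a - b|`. Multiplying over the
coordinates gives the pointwise bound `exp (‖a - b‖₁ / λ)` between the product densities, and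
integrating it bounds the measures.
-/

theorem laplace_density_factor_le {lam : ℝ} (hlam : 0 ≤ lam) (t a b : ℝ) :
    1 / (2 * lam) * Real.exp (-|t - a| / lam)
      ≤ Real.exp (|a - b| / lam) * (1 / (2 * lam) * Real.exp (-|t - b| / lam)) := by
  have hexponent : -|t - a| / lam ≤ |a - b| / lam + -|t - b| / lam := by
    rw [← add_div]
    exact div_le_div_of_nonneg_right (by linarith [abs_sub_le t a b]) hlam
  calc 1 / (2 * lam) * Real.exp (-|t - a| / lam)
      ≤ 1 / (2 * lam) * Real.exp (|a - b| / lam + -|t - b| / lam) := by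
        gcongr
    _ = Real.exp (|a - b| / lam) * (1 / (2 * lam) * Real.exp (-|t - b| / lam)) := by
        rw [Real.exp_add]; ring

theorem prod_laplace_density_le {ι : Type*} [Fintype ι] {lam : ℝ} (hlam : 0 ≤ lam)
    (x a b : ι → ℝ) :
    ∏ i, 1 / (2 * lam) * Real.exp (-|x i - a i| / lam)
      ≤ Real.exp ((∑ i, |a i - b i|) / lam) *
          ∏ i, 1 / (2 * lam) * Real.exp (-|x i - b i| / lam) := by
  calc ∏ i, 1 / (2 * lam) * Real.exp (-|x i - a i| / lam)
      ≤ ∏ i, Real.exp (|a i - b i| / lam) * (1 / (2 * lam) * Real.exp (-|x i - b i| / lam)) :=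
        Finset.prod_le_prod (fun i _ => by positivity)
          (fun i _ => laplace_density_factor_le hlam (x i) (a i) (b i))
    _ = Real.exp ((∑ i, |a i - b i|) / lam) *
          ∏ i, 1 / (2 * lam) * Real.exp (-|x i - b i| / lam) := by
        rw [Finset.prod_mul_distrib, Finset.sum_div, Real.exp_sum]

theorem laplaceMeasure_le_smul (d : ℕ) {lam : ℝ} (hlam : 0 ≤ lam) (q q' : Fin d → ℝ) :
    laplaceMeasure d lam q
      ≤ ENNReal.ofReal (Real.exp ((∑ i, |q i - q' i|) / lam)) • laplaceMeasure d lam q' := by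
  rw [laplaceMeasure, laplaceMeasure, ← withDensity_smul' _ _ ENNReal.ofReal_ne_top]
  refine withDensity_mono (Filter.Eventually.of_forall fun x => ?_)
  rw [Pi.smul_apply, smul_eq_mul, ← ENNReal.ofReal_mul (Real.exp_nonneg _)]
  exact ENNReal.ofReal_le_ofReal (prod_laplace_density_le hlam x q q')

theorem laplace_measure_ratio_bound_general
    (d : ℕ) (lam : ℝ) (hlam : 0 < lam) (q q' : Fin d → ℝ)
    (S : Set (Fin d → ℝ)) :
    laplaceMeasure d lam q S
      ≤ ENNReal.ofReal (Real.exp ((∑ i : Fin d, |q i - q' i|) / lam)) *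
        laplaceMeasure d lam q' S :=
  Measure.le_iff'.mp (laplaceMeasure_le_smul d hlam.le q q') S

/-- The i.i.d. Laplace measures at two centers differ by at most a factor
`exp (‖q - q'‖₁ / lam)` on every measurable set. -/
theorem laplace_measure_ratio_bound
    (d : ℕ) (hd : 1 ≤ d) (lam : ℝ) (hlam : 0 < lam) (q q' : Fin d → ℝ)
    (S : Set (Fin d → ℝ)) (hS : MeasurableSet S) :
    laplaceMeasure d lam q S
      ≤ ENNReal.ofReal (Real.exp ((∑ i : Fin d, |q i - q' i|) / lam)) *
        laplaceMeasure d lam q' S :=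
  laplace_measure_ratio_bound_general d lam hlam q q' S
end
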